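/- arXiv:2106.13481 — 6 statements merged into one kernel-verified Lean document; each statement's English description precedes it below -/
import Mathlib

section
/- For every λ > 0, every real number x, and every integer n ≥ 0, the λ-falling factorial satisfies (x)_{n,λ} = Σ_{k=0}^n β_{k,λ}(x) S_{1,λ}(n,k), where β_{k,λ}(x) are the fully degenerate Bell polynomials and S_{1,λ}(n,k) are the degenerate Stirling numbers of the first kind. -/
/-- The lambda-falling factorial `(x)_{n,lam}`. -/
noncomputable def dffac (lam x : ℝ) (n : ℕ) : ℝ := ∏ i ∈ Finset.range n, (x - i * lam)

/-- The ordinary falling factorial `(x)_n`. -/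
noncomputable def ffac (x : ℝ) (n : ℕ) : ℝ := ∏ i ∈ Finset.range n, (x - i)

/-- The rising factorial. -/
noncomputable def rfac (x : ℝ) (n : ℕ) : ℝ := ∏ i ∈ Finset.range n, (x + i)

/-- The fully degenerate Bell polynomial: n! times the n-th Taylor coefficient at t = 0
of the function t => (1 + lam*((1+lam*t)^(1/lam) - 1))^(x/lam). -/
noncomputable def fdBell (lam x : ℝ) (n : ℕ) : ℝ :=
  iteratedDeriv n (fun t : ℝ => (1 + lam * ((1 + lam * t) ^ (1 / lam) - 1)) ^ (x / lam)) 0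

open Filter Finset Real

/-! ### Auxiliary lemmas -/

lemma DB.ffac_nat_self (j : ℕ) : ffac (j : ℝ) j = j.factorial := by
  rw [ffac]
  have h : (∏ i ∈ Finset.range j, (j - i)) = j.factorial := by
    rw [← Finset.prod_range_reflect, ← Finset.prod_range_add_one_eq_factorial]
    apply Finset.prod_congr rfl
    intro i hi
    have := Finset.mem_range.mp hi
    omega
  rw [← h]
  push_cast
  apply Finset.prod_congr rfl
  intro i hi
  have := Finset.mem_range.mp hi
  rw [Nat.cast_sub (le_of_lt this)]

lemma DB.ffac_nat_zero {j k : ℕ} (h : j < k) : ffac (j : ℝ) k = 0 := by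
  rw [ffac]
  apply Finset.prod_eq_zero (Finset.mem_range.mpr h)
  simp

lemma DB.analyticAt_rlog {t : ℝ} (ht : 0 < t) : AnalyticAt ℝ Real.log t := by
  have h0 : AnalyticAt ℝ ((⇑Complex.reCLM) ∘ (Complex.log ∘ fun s : ℝ => (s : ℂ))) t := by
    apply AnalyticAt.comp (Complex.reCLM.analyticAt _)
    apply AnalyticAt.comp ?_ (Complex.ofRealCLM.analyticAt _)
    exact (analyticAt_clog (Complex.ofReal_mem_slitPlane.mpr ht)).restrictScalars
  have h1 : AnalyticAt ℝ (fun s : ℝ => (Complex.log (s : ℂ)).re) t := h0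
  have h2 : Real.log = fun s : ℝ => (Complex.log (s : ℂ)).re := by
    funext s
    rw [Complex.log_re, Complex.norm_real, Real.norm_eq_abs, Real.log_abs]
  rw [h2]
  exact h1

lemma DB.analyticAt_rpow_const {t a : ℝ} (ht : 0 < t) :
    AnalyticAt ℝ (fun s : ℝ => s ^ a) t := by
  have h0 : AnalyticAt ℝ (Real.exp ∘ fun s : ℝ => Real.log s * a) t :=
    AnalyticAt.comp analyticAt_rexp ((DB.analyticAt_rlog ht).mul analyticAt_const)
  have h1 : AnalyticAt ℝ (fun s : ℝ => Real.exp (Real.log s * a)) t := h0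
  apply h1.congr
  filter_upwards [eventually_gt_nhds ht] with s hs
  rw [Real.rpow_def_of_pos hs]

lemma DB.pos_aux {c u : ℝ} (hc : 0 < c) (hu : -(1/c) < u) : 0 < 1 + c * u := by
  have h' : c * (-(1/c)) < c * u := mul_lt_mul_of_pos_left hu hc
  have h'' : c * (-(1/c)) = -1 := by field_simp
  linarith

lemma DB.iter_rpow (c a : ℝ) (hc : 0 < c) :
    ∀ (k : ℕ) {t : ℝ}, -(1/c) < t →
      iteratedDeriv k (fun u : ℝ => (1 + c*u) ^ a) t
        = (∏ i ∈ Finset.range k, (a - i)) * c ^ k * (1 + c*t) ^ (a - k) := by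
  intro k
  induction k with
  | zero => intro t ht; simp
  | succ k ih =>
    intro t ht
    rw [iteratedDeriv_succ]
    have hev : iteratedDeriv k (fun u : ℝ => (1 + c*u) ^ a)
        =ᶠ[nhds t] fun u => (∏ i ∈ Finset.range k, (a - i)) * c ^ k * (1 + c*u) ^ (a - k) := by
      filter_upwards [eventually_gt_nhds ht] with u hu using ih hu
    rw [hev.deriv_eq]
    have h1 : HasDerivAt (fun u : ℝ => 1 + c*u) c t := by
      simpa using ((hasDerivAt_id t).const_mul c).const_add 1
    have h2 : HasDerivAt (fun u : ℝ => (1 + c*u) ^ (a - k))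
        (((a - k) * (1 + c*t) ^ (a - k - 1)) * c) t :=
      by have := (Real.hasDerivAt_rpow_const (p := a - k) (Or.inl (DB.pos_aux hc ht).ne')).comp t h1; exact this
    rw [(h2.const_mul _).deriv]
    rw [Finset.prod_range_succ]
    have he : a - ((k : ℝ) + 1) = a - k - 1 := by ring
    push_cast
    rw [he]
    ring

lemma DB.coeff_from_series {f : ℝ → ℝ} {p : FormalMultilinearSeries ℝ ℝ ℝ}
    (h : HasFPowerSeriesAt f p 0) (n : ℕ) :
    iteratedDeriv n f 0 = n.factorial * p.coeff n := by
  obtain ⟨r, hr⟩ := h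
  have h2 := hr.factorial_smul (1:ℝ) n
  rw [iteratedDeriv_eq_iteratedFDeriv, ← h2, nsmul_eq_mul]
  rfl

lemma DB.comp_coeff (pout pin : FormalMultilinearSeries ℝ ℝ ℝ) (n : ℕ) :
    (pout.comp pin).coeff n
      = ∑ k ∈ Finset.range (n+1),
          pout.coeff k *
            ∑ c ∈ Finset.univ.filter fun c : Composition n => c.length = k,
              ∏ i, pin.coeff (c.blocksFun i) := by
  have h1 : (pout.comp pin).coeff n
      = ∑ c : Composition n, pout.coeff c.length * ∏ i, pin.coeff (c.blocksFun i) := by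
    show (∑ c : Composition n, pout.compAlongComposition pin c) (fun _ => (1:ℝ)) = _
    rw [ContinuousMultilinearMap.sum_apply]
    refine Finset.sum_congr rfl fun c _ => ?_
    rw [FormalMultilinearSeries.compAlongComposition_apply]
    have happ : pin.applyComposition c (fun _ => (1:ℝ))
        = fun i => (pin.coeff (c.blocksFun i)) • (1:ℝ) := by
      funext i
      simp only [smul_eq_mul, mul_one]
      rfl
    rw [happ, ContinuousMultilinearMap.map_smul_univ, smul_eq_mul, mul_comm]
    rfl
  rw [h1, ← Finset.sum_fiberwise_of_maps_to
    (fun c _ => Finset.mem_range.mpr (Nat.lt_succ_of_le c.length_le))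
    (fun c : Composition n => pout.coeff c.length * ∏ i, pin.coeff (c.blocksFun i))]
  refine Finset.sum_congr rfl fun k _ => ?_
  rw [Finset.mul_sum]
  refine Finset.sum_congr rfl fun c hc => ?_
  exact congrArg (fun z => pout.coeff z * ∏ i, pin.coeff (c.blocksFun i))
    (Finset.mem_filter.mp hc).2

/-- The coefficients `c(m,k)` coming from composition with the inner series `q`. -/
noncomputable def DB.ccoef (q : FormalMultilinearSeries ℝ ℝ ℝ) (m k : ℕ) : ℝ :=
  (m.factorial / k.factorial : ℝ) *
    ∑ c ∈ Finset.univ.filter fun c : Composition m => c.length = k,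
      ∏ i, q.coeff (c.blocksFun i)

lemma DB.ccoef_zero (q : FormalMultilinearSeries ℝ ℝ ℝ) {m k : ℕ} (h : m < k) :
    DB.ccoef q m k = 0 := by
  rw [DB.ccoef]
  have hemp : (Finset.univ.filter fun c : Composition m => c.length = k) = ∅ := by
    apply Finset.filter_eq_empty_iff.mpr
    intro c _
    have := c.length_le
    omega
  rw [hemp]
  simp

lemma DB.master {g F : ℝ → ℝ} {q pF : FormalMultilinearSeries ℝ ℝ ℝ}
    (hg : HasFPowerSeriesAt g q 0) (hg0 : g 0 = 0)
    (hF : HasFPowerSeriesAt F pF 0) (n : ℕ) :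
    iteratedDeriv n (F ∘ g) 0
      = ∑ k ∈ Finset.range (n+1), iteratedDeriv k F 0 * DB.ccoef q n k := by
  have hF' : HasFPowerSeriesAt F pF (g 0) := by rw [hg0]; exact hF
  have hcomp : HasFPowerSeriesAt (F ∘ g) (pF.comp q) 0 := hF'.comp hg
  rw [DB.coeff_from_series hcomp, DB.comp_coeff, Finset.mul_sum]
  refine Finset.sum_congr rfl fun k _ => ?_
  have hk := DB.coeff_from_series hF k
  have hkfac : (k.factorial : ℝ) ≠ 0 := Nat.cast_ne_zero.mpr k.factorial_ne_zero
  have hco : pF.coeff k = iteratedDeriv k F 0 / k.factorial := by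
    rw [hk]; field_simp
  rw [hco, DB.ccoef]
  field_simp

/-- The inner function. -/
noncomputable def DB.ginner (lam : ℝ) : ℝ → ℝ := fun t => (1 + lam * t) ^ (1 / lam) - 1

lemma DB.ginner_zero (lam : ℝ) : DB.ginner lam 0 = 0 := by
  simp [DB.ginner]

lemma DB.ginner_analytic {lam : ℝ} (hlam : 0 < lam) : AnalyticAt ℝ (DB.ginner lam) 0 := by
  have haff : AnalyticAt ℝ (fun t : ℝ => 1 + lam * t) 0 :=
    analyticAt_const.add (analyticAt_const.mul analyticAt_id)
  have hr : AnalyticAt ℝ (fun s : ℝ => s ^ (1/lam)) 1 := DB.analyticAt_rpow_const one_pos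
  have h0 : AnalyticAt ℝ (((fun s : ℝ => s ^ (1/lam)) ∘ fun t : ℝ => 1 + lam * t) - fun _ => (1:ℝ)) 0 :=
    (hr.comp_of_eq haff (by norm_num)).sub analyticAt_const
  exact h0

lemma DB.analyticAt_outer (c a : ℝ) : AnalyticAt ℝ (fun u : ℝ => (1 + c*u) ^ a) 0 := by
  have haff : AnalyticAt ℝ (fun t : ℝ => 1 + c * t) 0 :=
    analyticAt_const.add (analyticAt_const.mul analyticAt_id)
  have hr : AnalyticAt ℝ (fun s : ℝ => s ^ a) 1 := DB.analyticAt_rpow_const one_pos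
  exact hr.comp_of_eq haff (by norm_num)

lemma DB.masterAll {lam : ℝ} (hlam : 0 < lam) {q : FormalMultilinearSeries ℝ ℝ ℝ}
    (hq : HasFPowerSeriesAt (DB.ginner lam) q 0) (c a : ℝ) (hc : 0 < c) (m : ℕ) :
    iteratedDeriv m ((fun u : ℝ => (1 + c*u) ^ a) ∘ DB.ginner lam) 0
      = ∑ k ∈ Finset.range (m+1),
          ((∏ i ∈ Finset.range k, (a - i)) * c ^ k) * DB.ccoef q m k := by
  obtain ⟨pF, hpF⟩ := DB.analyticAt_outer c a
  rw [DB.master hq (DB.ginner_zero lam) hpF m]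
  refine Finset.sum_congr rfl fun k _ => ?_
  have hn : -(1/c) < (0:ℝ) := by
    have : (0:ℝ) < 1/c := by positivity
    linarith
  rw [DB.iter_rpow c a hc k hn]
  norm_num

lemma DB.dffac_eq (lam x : ℝ) (hlam : lam ≠ 0) (k : ℕ) :
    dffac lam x k = (∏ i ∈ Finset.range k, (x/lam - i)) * lam ^ k := by
  rw [dffac, show lam ^ k = ∏ _i ∈ Finset.range k, lam from by
    rw [Finset.prod_const, Finset.card_range], ← Finset.prod_mul_distrib]
  apply Finset.prod_congr rfl
  intro i _
  field_simp

lemma DB.factA {lam : ℝ} (hlam : 0 < lam) {q : FormalMultilinearSeries ℝ ℝ ℝ}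
    (hq : HasFPowerSeriesAt (DB.ginner lam) q 0) (x : ℝ) (m : ℕ) :
    fdBell lam x m = ∑ k ∈ Finset.range (m+1), dffac lam x k * DB.ccoef q m k := by
  have h1 : fdBell lam x m
      = iteratedDeriv m ((fun u : ℝ => (1 + lam*u) ^ (x/lam)) ∘ DB.ginner lam) 0 := rfl
  rw [h1, DB.masterAll hlam hq lam (x/lam) hlam m]
  refine Finset.sum_congr rfl fun k _ => ?_
  rw [DB.dffac_eq lam x hlam.ne' k]

lemma DB.factB {lam : ℝ} (hlam : 0 < lam) {q : FormalMultilinearSeries ℝ ℝ ℝ}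
    (hq : HasFPowerSeriesAt (DB.ginner lam) q 0) (y : ℝ) (m : ℕ) :
    dffac lam y m = ∑ k ∈ Finset.range (m+1), ffac y k * DB.ccoef q m k := by
  have hn : -(1/lam) < (0:ℝ) := by
    have : (0:ℝ) < 1/lam := by positivity
    linarith
  have hev : (fun t : ℝ => (1 + lam*t) ^ (y/lam))
      =ᶠ[nhds (0:ℝ)] ((fun u : ℝ => (1 + 1*u) ^ y) ∘ DB.ginner lam) := by
    filter_upwards [eventually_gt_nhds hn] with t ht
    have hpos : 0 < 1 + lam * t := DB.pos_aux hlam ht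
    show (1 + lam*t) ^ (y/lam) = (1 + 1*((1 + lam*t) ^ (1/lam) - 1)) ^ y
    have hb : 1 + 1*((1 + lam*t) ^ (1/lam) - 1) = (1 + lam*t) ^ (1/lam) := by ring
    rw [hb]
    have hy : y / lam = (1/lam) * y := by ring
    rw [hy, Real.rpow_mul hpos.le]
  have hD : dffac lam y m = iteratedDeriv m (fun t : ℝ => (1 + lam*t) ^ (y/lam)) 0 := by
    rw [DB.iter_rpow lam (y/lam) hlam m hn]
    rw [mul_zero, add_zero, Real.one_rpow, mul_one, ← DB.dffac_eq lam y hlam.ne']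
  rw [hD, hev.iteratedDeriv_eq m, DB.masterAll hlam hq 1 y one_pos m]
  refine Finset.sum_congr rfl fun k _ => ?_
  rw [ffac]
  norm_num

theorem stmt_0 (lam : ℝ) (hlam : 0 < lam) (S1 : ℕ → ℕ → ℝ)
    (hS1 : ∀ (n : ℕ) (x : ℝ),
      ffac x n = ∑ l ∈ Finset.range (n + 1), S1 n l * dffac lam x l)
    (x : ℝ) (n : ℕ) :
    dffac lam x n = ∑ k ∈ Finset.range (n + 1), fdBell lam x k * S1 n k := by
  classical
  obtain ⟨q, hq⟩ := DB.ginner_analytic hlam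
  set M : ℕ → ℝ := fun j => ∑ k ∈ Finset.range (n+1), S1 n k * DB.ccoef q k j with hMdef
  -- Step 1 : for every y, ffac y n = ∑ M j * ffac y j
  have step1 : ∀ y : ℝ, ffac y n = ∑ j ∈ Finset.range (n+1), M j * ffac y j := by
    intro y
    rw [hS1 n y]
    have h1 : ∀ l ∈ Finset.range (n+1),
        S1 n l * dffac lam y l
          = ∑ k ∈ Finset.range (n+1), S1 n l * (ffac y k * DB.ccoef q l k) := by
      intro l hl
      rw [DB.factB hlam hq y l, Finset.mul_sum]
      apply Finset.sum_subset
      · apply Finset.range_subset_range.mpr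
        have := Finset.mem_range.mp hl
        omega
      · intro k hk hk2
        have hlk : l < k := by
          simp only [Finset.mem_range] at hk hk2
          omega
        rw [DB.ccoef_zero q hlk, mul_zero, mul_zero]
    rw [Finset.sum_congr rfl h1, Finset.sum_comm]
    refine Finset.sum_congr rfl fun j _ => ?_
    simp only [hMdef, Finset.sum_mul]
    refine Finset.sum_congr rfl fun k _ => ?_
    ring
  -- Step 2 : M is a delta
  have step2 : ∀ j, j ≤ n → M j = if n = j then 1 else 0 := by
    intro j
    induction j using Nat.strong_induction_on with
    | _ j ih =>
      intro hj
      have H := step1 (j : ℝ)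
      have hR : ∑ jj ∈ Finset.range (n+1), M jj * ffac (j:ℝ) jj
          = ∑ jj ∈ Finset.range (j+1), M jj * ffac (j:ℝ) jj := by
        symm
        apply Finset.sum_subset
        · exact Finset.range_subset_range.mpr (by omega)
        · intro k hk hk2
          have hjk : j < k := by
            simp only [Finset.mem_range] at hk hk2
            omega
          rw [DB.ffac_nat_zero hjk, mul_zero]
      have hzero : ∀ jj ∈ Finset.range j, M jj * ffac (j:ℝ) jj = 0 := by
        intro jj hjj
        have hjjlt := Finset.mem_range.mp hjj
        rw [ih jj hjjlt (by omega), if_neg (by omega), zero_mul]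
      rw [hR, Finset.sum_range_succ, Finset.sum_eq_zero hzero, zero_add,
        DB.ffac_nat_self j] at H
      have hfac : ((j.factorial : ℝ)) ≠ 0 := Nat.cast_ne_zero.mpr j.factorial_ne_zero
      by_cases hnj : n = j
      · rw [if_pos hnj]
        rw [hnj, DB.ffac_nat_self j] at H
        have h2 : M j * (j.factorial : ℝ) = 1 * (j.factorial : ℝ) := by
          rw [one_mul]; exact H.symm
        exact mul_right_cancel₀ hfac h2
      · have hjn : j < n := by omega
        rw [DB.ffac_nat_zero hjn] at H
        rw [if_neg hnj]
        have := H.symm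
        rcases mul_eq_zero.mp this with h | h
        · exact h
        · exact absurd h hfac
  -- Final computation
  have final : ∑ k ∈ Finset.range (n+1), fdBell lam x k * S1 n k
      = ∑ j ∈ Finset.range (n+1), dffac lam x j * M j := by
    have h1 : ∀ k ∈ Finset.range (n+1), fdBell lam x k * S1 n k
        = ∑ j ∈ Finset.range (n+1), dffac lam x j * DB.ccoef q k j * S1 n k := by
      intro k hk
      rw [DB.factA hlam hq x k, Finset.sum_mul]
      apply Finset.sum_subset
      · apply Finset.range_subset_range.mpr
        have := Finset.mem_range.mp hk
        omega
      · intro j hj hj2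
        have hkj : k < j := by
          simp only [Finset.mem_range] at hj hj2
          omega
        rw [DB.ccoef_zero q hkj, mul_zero, zero_mul]
    rw [Finset.sum_congr rfl h1, Finset.sum_comm]
    refine Finset.sum_congr rfl fun j _ => ?_
    simp only [hMdef, Finset.mul_sum]
    refine Finset.sum_congr rfl fun k _ => ?_
    ring
  have hdelta : ∀ j ∈ Finset.range (n+1),
      dffac lam x j * M j = dffac lam x j * (if n = j then 1 else 0) := by
    intro j hj
    rw [step2 j (Nat.lt_succ_iff.mp (Finset.mem_range.mp hj))]
  rw [final, Finset.sum_congr rfl hdelta]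
  simp only [mul_ite, mul_one, mul_zero]
  rw [Finset.sum_ite_eq (Finset.range (n+1)) n (fun j => dffac lam x j)]
  simp
end

section
/- For every λ > 0 and all integers 0 ≤ k ≤ n, the degenerate Stirling numbers satisfy the orthogonality relation Σ_{l=k}^n S_{1,λ}(n,l) S_{2,λ}(l,k) = δ_{n,k}, where δ_{n,k} is the Kronecker delta. -/
theorem stmt_2 (lam : ℝ) (hlam : 0 < lam) (S1 S2 : ℕ → ℕ → ℝ)
    (hS1 : ∀ (n : ℕ) (x : ℝ),
      ffac x n = ∑ l ∈ Finset.range (n + 1), S1 n l * dffac lam x l)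
    (hS2 : ∀ (n : ℕ) (x : ℝ),
      dffac lam x n = ∑ l ∈ Finset.range (n + 1), S2 n l * ffac x l)
    (n k : ℕ) (hkn : k ≤ n) :
    ∑ l ∈ Finset.Icc k n, S1 n l * S2 l k = if n = k then 1 else 0 := by
  have hzero : ∀ j m : ℕ, j < m → ffac (j : ℝ) m = 0 := by
    intro j m h
    apply Finset.prod_eq_zero (Finset.mem_range.2 h)
    simp
  have hne : ∀ j : ℕ, ffac (j : ℝ) j ≠ 0 := by
    intro j
    apply ne_of_gt
    apply Finset.prod_pos
    intro i hi
    have hi' : (i : ℝ) < j := by exact_mod_cast Finset.mem_range.1 hi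
    linarith
  set C : ℕ → ℝ := fun m => ∑ l ∈ Finset.Icc m n, S1 n l * S2 l m with hC
  have key : ∀ x : ℝ, ffac x n = ∑ m ∈ Finset.range (n + 1), C m * ffac x m := by
    intro x
    rw [hS1 n x]
    calc ∑ l ∈ Finset.range (n + 1), S1 n l * dffac lam x l
        = ∑ l ∈ Finset.range (n + 1), ∑ m ∈ Finset.range (l + 1),
            S1 n l * S2 l m * ffac x m := by
          refine Finset.sum_congr rfl fun l _ => ?_
          rw [hS2 l x, Finset.mul_sum]
          exact Finset.sum_congr rfl fun m _ => by ring
      _ = ∑ m ∈ Finset.range (n + 1), ∑ l ∈ Finset.Icc m n,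
            S1 n l * S2 l m * ffac x m := by
          apply Finset.sum_comm'
          intro l m
          simp only [Finset.mem_range, Finset.mem_Icc, Nat.lt_succ_iff]
          omega
      _ = ∑ m ∈ Finset.range (n + 1), C m * ffac x m := by
          refine Finset.sum_congr rfl fun m _ => ?_
          simp only [hC, Finset.sum_mul, mul_assoc]
  have hC0 : ∀ m, m < n → C m = 0 := by
    intro m
    induction m using Nat.strong_induction_on with
    | _ m ih =>
      intro hm
      have h := key (m : ℝ)
      rw [hzero m n hm] at h
      have hsum : ∑ b ∈ Finset.range (n + 1), C b * ffac (m : ℝ) b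
          = C m * ffac (m : ℝ) m := by
        apply Finset.sum_eq_single
        · intro b hb hbm
          rcases lt_or_gt_of_ne hbm with h1 | h1
          · rw [ih b h1 (h1.trans hm), zero_mul]
          · rw [hzero m b h1, mul_zero]
        · intro habs
          exact absurd (Finset.mem_range.2 (by omega)) habs
      rw [hsum] at h
      exact (mul_eq_zero.1 h.symm).resolve_right (hne m)
  rcases eq_or_lt_of_le hkn with heq | hlt
  · subst heq
    rw [if_pos rfl]
    have h := key (k : ℝ)
    have hsum : ∑ b ∈ Finset.range (k + 1), C b * ffac (k : ℝ) b
        = C k * ffac (k : ℝ) k := by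
      apply Finset.sum_eq_single
      · intro b hb hbm
        have hb' : b < k + 1 := Finset.mem_range.1 hb
        rw [hC0 b (by omega), zero_mul]
      · intro habs
        exact absurd (Finset.mem_range.2 (by omega)) habs
    rw [hsum] at h
    have hck : C k = 1 :=
      mul_right_cancel₀ (hne k) (by rw [one_mul]; exact h.symm)
    simpa [hC] using hck
  · rw [if_neg (by omega)]
    simpa [hC] using hC0 k hlt
end

section
/- Let λ > 0, α > 0 with λα < 1, and let X ∼ Poi_λ(α) be the degenerate Poisson random variable with parameter α. Then for every integer n ≥ 0, the falling factorial moment satisfies E[(X)_n] = Σ_{k=0}^n Bel_{k,λ}(α) S_{1,λ}(n,k), where Bel_{k,λ} is the degenerate Bell polynomial and S_{1,λ}(n,k) are the degenerate Stirling numbers of the first kind. -/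
/-- Expectation of `f(X)` for the degenerate Poisson random variable `X ~ Poi_lam(a)`. -/
noncomputable def degPoiE (lam a : ℝ) (f : ℕ → ℝ) : ℝ :=
  (1 + lam * a) ^ (-(1 / lam)) * ∑' i : ℕ, f i * dffac lam 1 i * a ^ i / (i.factorial : ℝ)

/-- The degenerate Bell polynomial `Bel_{n,lam}(x)`. -/
noncomputable def degBellP (lam x : ℝ) (n : ℕ) : ℝ :=
  (1 + lam * x) ^ (-(1 / lam)) *
    ∑' k : ℕ, dffac lam 1 k * dffac lam (k : ℝ) n * x ^ k / (k.factorial : ℝ)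

lemma natProdBound (i m' : ℕ) :
    ∏ j ∈ Finset.range i, (j + (m' + 1)) ≤ i.factorial * (i + (m' + 1)) ^ (m' + 1) := by
  have h1 : ∏ j ∈ Finset.range i, (j + (m' + 1)) = (m' + 1).ascFactorial i := by
    induction i with
    | zero => simp
    | succ k ih => rw [Finset.prod_range_succ, ih, Nat.ascFactorial_succ]; ring
  have h2 : m'.factorial * (m' + 1).ascFactorial i = (m' + i).factorial :=
    Nat.factorial_mul_ascFactorial m' i
  have h3 : i.factorial * (i + 1).ascFactorial m' = (i + m').factorial :=
    Nat.factorial_mul_ascFactorial i m'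
  have h4 : (i + 1).ascFactorial m' ≤ (i + m') ^ m' := Nat.ascFactorial_le_pow_add i m'
  calc ∏ j ∈ Finset.range i, (j + (m' + 1)) = (m' + 1).ascFactorial i := h1
    _ ≤ m'.factorial * (m' + 1).ascFactorial i := Nat.le_mul_of_pos_left _ m'.factorial_pos
    _ = (i + m').factorial := by rw [h2, Nat.add_comm]
    _ = i.factorial * (i + 1).ascFactorial m' := h3.symm
    _ ≤ i.factorial * (i + m') ^ m' := Nat.mul_le_mul_left _ h4
    _ ≤ i.factorial * (i + (m' + 1)) ^ (m' + 1) := by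
        apply Nat.mul_le_mul_left
        calc (i + m') ^ m' ≤ (i + (m' + 1)) ^ m' := Nat.pow_le_pow_left (by omega) _
          _ ≤ (i + (m' + 1)) ^ (m' + 1) := Nat.pow_le_pow_right (by omega) (by omega)

lemma key_summable (lam a : ℝ) (hlam : 0 < lam) (ha : 0 < a) (hla : lam * a < 1) (k : ℕ) :
    Summable (fun i : ℕ => dffac lam 1 i * dffac lam (i : ℝ) k * a ^ i / (i.factorial : ℝ)) := by
  set m' : ℕ := ⌈1 / lam⌉₊ + ⌈lam⌉₊ with hm'
  set m : ℕ := m' + 1 with hm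
  have hm1 : (1 : ℝ) ≤ lam * m := by
    have h0 : ⌈1 / lam⌉₊ ≤ m := by rw [hm, hm']; omega
    have h1 : 1 / lam ≤ (m : ℝ) := (Nat.le_ceil _).trans (by exact_mod_cast h0)
    calc (1 : ℝ) = lam * (1 / lam) := by field_simp
      _ ≤ lam * m := by gcongr
  have hmlam : lam ≤ (m : ℝ) := by
    have h0 : ⌈lam⌉₊ ≤ m := by rw [hm, hm']; omega
    exact (Nat.le_ceil _).trans (by exact_mod_cast h0)
  set r : ℝ := lam * a with hr
  have hr0 : 0 < r := mul_pos hlam ha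
  set p : ℕ := m + k with hp
  set B : ℝ := ((m : ℝ) + 1) ^ m * (((k * m : ℕ) : ℝ) + 1) ^ k with hB
  have hs0 : Summable (fun i : ℕ => (i : ℝ) ^ p * r ^ i) :=
    summable_pow_mul_geometric_of_norm_lt_one p
      (by rw [Real.norm_eq_abs, abs_of_pos hr0]; exact hla)
  have hs1 : Summable (fun i : ℕ => r * (((i : ℝ) + 1) ^ p * r ^ i)) := by
    have := (_root_.summable_nat_add_iff (f := fun i : ℕ => (i : ℝ) ^ p * r ^ i) 1).mpr hs0
    refine this.congr fun i => ?_
    push_cast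
    ring
  have hs2 : Summable (fun i : ℕ => ((i : ℝ) + 1) ^ p * r ^ i) :=
    (summable_mul_left_iff hr0.ne').mp hs1
  have hs3 : Summable (fun i : ℕ => B * (((i : ℝ) + 1) ^ p * r ^ i)) := hs2.mul_left B
  apply Summable.of_abs
  apply Summable.of_nonneg_of_le (fun i => abs_nonneg _) _ hs3
  intro i
  have hfacpos : (0 : ℝ) < (i.factorial : ℝ) := by exact_mod_cast i.factorial_pos
  have hb1 : |dffac lam 1 i| ≤ lam ^ i * ∏ j ∈ Finset.range i, ((j : ℝ) + (m : ℝ)) := by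
    rw [dffac, Finset.abs_prod]
    calc ∏ j ∈ Finset.range i, |1 - (j : ℝ) * lam|
        ≤ ∏ j ∈ Finset.range i, (lam * ((j : ℝ) + (m : ℝ))) := ?_
      _ = lam ^ i * ∏ j ∈ Finset.range i, ((j : ℝ) + (m : ℝ)) := by
          rw [Finset.prod_mul_distrib, Finset.prod_const, Finset.card_range]
    apply Finset.prod_le_prod (fun j _ => abs_nonneg _)
    intro j _
    have hj0 : (0 : ℝ) ≤ lam * j := by positivity
    rcases le_total ((j : ℝ) * lam) 1 with h | h
    · rw [abs_of_nonneg (by linarith)]; nlinarith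
    · rw [abs_of_nonpos (by linarith)]; nlinarith
  have hb2 : ∏ j ∈ Finset.range i, ((j : ℝ) + (m : ℝ)) ≤
      (i.factorial : ℝ) * ((i : ℝ) + (m : ℝ)) ^ m := by
    have h := natProdBound i m'
    rw [hm]
    exact_mod_cast h
  have hb12 : |dffac lam 1 i| ≤ lam ^ i * ((i.factorial : ℝ) * ((i : ℝ) + (m : ℝ)) ^ m) :=
    hb1.trans (mul_le_mul_of_nonneg_left hb2 (by positivity))
  have hb3 : |dffac lam (i : ℝ) k| ≤ ((i : ℝ) + ((k * m : ℕ) : ℝ)) ^ k := by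
    rw [dffac, Finset.abs_prod]
    calc ∏ j ∈ Finset.range k, |(i : ℝ) - (j : ℝ) * lam|
        ≤ ∏ j ∈ Finset.range k, ((i : ℝ) + ((k * m : ℕ) : ℝ)) := by
          apply Finset.prod_le_prod (fun j _ => abs_nonneg _)
          intro j hj
          have hjk : (j : ℝ) ≤ (k : ℝ) := by
            exact_mod_cast (Finset.mem_range.mp hj).le
          have h1 : (j : ℝ) * lam ≤ (k : ℝ) * (m : ℝ) :=
            mul_le_mul hjk hmlam hlam.le (Nat.cast_nonneg k)
          have hi0 : (0 : ℝ) ≤ (i : ℝ) := Nat.cast_nonneg i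
          have hjl : (0 : ℝ) ≤ (j : ℝ) * lam := by positivity
          have h1' : (j : ℝ) * lam ≤ ((k * m : ℕ) : ℝ) := by push_cast at h1 ⊢; linarith
          rw [abs_le]
          constructor <;> linarith
      _ = ((i : ℝ) + ((k * m : ℕ) : ℝ)) ^ k := by
          rw [Finset.prod_const, Finset.card_range]
  calc |dffac lam 1 i * dffac lam (i : ℝ) k * a ^ i / (i.factorial : ℝ)|
      = |dffac lam 1 i| * |dffac lam (i : ℝ) k| * a ^ i / (i.factorial : ℝ) := by
        rw [abs_div, abs_mul, abs_mul, abs_of_pos (pow_pos ha i), abs_of_pos hfacpos]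
    _ ≤ (lam ^ i * ((i.factorial : ℝ) * ((i : ℝ) + (m : ℝ)) ^ m)) *
          ((i : ℝ) + ((k * m : ℕ) : ℝ)) ^ k * a ^ i / (i.factorial : ℝ) := by
        gcongr
    _ = r ^ i * (((i : ℝ) + (m : ℝ)) ^ m * ((i : ℝ) + ((k * m : ℕ) : ℝ)) ^ k) := by
        rw [hr, mul_pow, div_eq_iff hfacpos.ne']
        ring
    _ ≤ r ^ i * ((((m : ℝ) + 1) * ((i : ℝ) + 1)) ^ m *
          ((((k * m : ℕ) : ℝ) + 1) * ((i : ℝ) + 1)) ^ k) := by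
        gcongr
        · nlinarith [Nat.cast_nonneg (α := ℝ) i, Nat.cast_nonneg (α := ℝ) m]
        · nlinarith [Nat.cast_nonneg (α := ℝ) i, Nat.cast_nonneg (α := ℝ) (k * m)]
    _ = B * (((i : ℝ) + 1) ^ p * r ^ i) := by
        simp only [hB, hp, pow_add, mul_pow]
        ring

theorem stmt_4 (lam a : ℝ) (hlam : 0 < lam) (ha : 0 < a) (hla : lam * a < 1)
    (S1 : ℕ → ℕ → ℝ)
    (hS1 : ∀ (n : ℕ) (x : ℝ),
      ffac x n = ∑ l ∈ Finset.range (n + 1), S1 n l * dffac lam x l)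
    (n : ℕ) :
    degPoiE lam a (fun i => ffac (i : ℝ) n) =
      ∑ k ∈ Finset.range (n + 1), degBellP lam a k * S1 n k := by
  have hsum : ∀ k : ℕ,
      Summable (fun i : ℕ => dffac lam 1 i * dffac lam (i : ℝ) k * a ^ i / (i.factorial : ℝ)) :=
    key_summable lam a hlam ha hla
  rw [degPoiE]
  have hterm : ∀ i : ℕ,
      ffac (i : ℝ) n * dffac lam 1 i * a ^ i / (i.factorial : ℝ) =
        ∑ k ∈ Finset.range (n + 1),
          S1 n k * (dffac lam 1 i * dffac lam (i : ℝ) k * a ^ i / (i.factorial : ℝ)) := by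
    intro i
    rw [hS1 n (i : ℝ), Finset.sum_mul, Finset.sum_mul, Finset.sum_div]
    exact Finset.sum_congr rfl fun k _ => by ring
  calc (1 + lam * a) ^ (-(1 / lam)) *
        ∑' i : ℕ, ffac (i : ℝ) n * dffac lam 1 i * a ^ i / (i.factorial : ℝ)
      = (1 + lam * a) ^ (-(1 / lam)) *
        ∑' i : ℕ, ∑ k ∈ Finset.range (n + 1),
          S1 n k * (dffac lam 1 i * dffac lam (i : ℝ) k * a ^ i / (i.factorial : ℝ)) := by
        congr 1
        exact tsum_congr hterm
    _ = (1 + lam * a) ^ (-(1 / lam)) *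
        ∑ k ∈ Finset.range (n + 1),
          ∑' i : ℕ, S1 n k * (dffac lam 1 i * dffac lam (i : ℝ) k * a ^ i / (i.factorial : ℝ)) := by
        congr 1
        exact Summable.tsum_finsetSum fun k _ => (hsum k).mul_left _
    _ = ∑ k ∈ Finset.range (n + 1), degBellP lam a k * S1 n k := by
        rw [Finset.mul_sum]
        refine Finset.sum_congr rfl fun k _ => ?_
        rw [tsum_mul_left, degBellP]
        ring
end

section
/- For every λ > 0, α > 0 with λα < 1, and every integer m ≥ 0, one has (1+λα)^m Σ_{k=0}^m Bel_{k,λ}(α) S_{1,λ}(m,k) = α^m (1)_{m,λ}, where Bel_{k,λ} is the degenerate Bell polynomial and S_{1,λ}(m,k) are the degenerate Stirling numbers of the first kind. -/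
open Filter
lemma ffac_zero (x : ℝ) : ffac x 0 = 1 := by simp [ffac]

lemma ffac_succ (x : ℝ) (n : ℕ) : ffac x (n + 1) = ffac x n * (x - n) := by
  simp [ffac, Finset.prod_range_succ]

lemma ffac_add (x : ℝ) (m n : ℕ) : ffac x (m + n) = ffac x m * ffac (x - m) n := by
  simp only [ffac, Finset.prod_range_add]
  congr 1
  exact Finset.prod_congr rfl (fun i _ => by push_cast; ring)

lemma ffac_nat_eq_zero {j m : ℕ} (h : j < m) : ffac (j : ℝ) m = 0 :=
  Finset.prod_eq_zero (Finset.mem_range.2 h) (by simp)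

lemma ffac_nat_factorial (i m : ℕ) :
    ffac ((i + m : ℕ) : ℝ) m * (i.factorial : ℝ) = ((i + m).factorial : ℝ) := by
  induction m with
  | zero => simp [ffac]
  | succ m ih =>
    have h1 : ffac ((i + (m + 1) : ℕ) : ℝ) (m + 1)
        = ffac ((i + m : ℕ) : ℝ) m * ((i + m + 1 : ℕ) : ℝ) := by
      rw [ffac, Finset.prod_range_succ', ffac]
      congr 1
      · exact Finset.prod_congr rfl fun t _ => by push_cast; ring
      · push_cast; ring
    have h2 : (i + (m + 1)).factorial = (i + m + 1) * (i + m).factorial := by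
      rw [show i + (m + 1) = (i + m) + 1 from rfl, Nat.factorial_succ]
    rw [h1, mul_right_comm, ih, h2]
    push_cast; ring

lemma summable_master (r : ℝ) (p : ℕ) {c : ℝ} (hc0 : 0 < c) (hc1 : c < 1) :
    Summable fun n : ℕ => |ffac r n| * ((n : ℝ) + 1) ^ p * c ^ n / n.factorial := by
  set t : ℕ → ℝ := fun n => |ffac r n| * ((n : ℝ) + 1) ^ p * c ^ n / n.factorial with ht
  have htpos : ∀ n, 0 ≤ t n := by
    intro n
    apply div_nonneg _ (by positivity)
    apply mul_nonneg (mul_nonneg (abs_nonneg _) (by positivity)) (by positivity)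
  -- the exact ratio
  have hratio : ∀ n : ℕ, t (n + 1) =
      t n * (|r - n| / ((n : ℝ) + 1) * (((n : ℝ) + 2) / ((n : ℝ) + 1)) ^ p * c) := by
    intro n
    have hn1 : ((n : ℝ) + 1) ≠ 0 := by positivity
    have hf : ((n + 1).factorial : ℝ) = ((n : ℝ) + 1) * n.factorial := by
      push_cast [Nat.factorial_succ]; ring
    simp only [ht]
    rw [ffac_succ, abs_mul, hf]
    have hfn : (n.factorial : ℝ) ≠ 0 := Nat.cast_ne_zero.2 n.factorial_ne_zero
    push_cast
    rw [div_pow]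
    field_simp
    ring
  -- the ratio tends to c
  have h1 : Tendsto (fun n : ℕ => |r - n| / ((n : ℝ) + 1)) atTop (nhds 1) := by
    have key : Tendsto (fun n : ℕ => 1 - (r + 1) / ((n : ℝ) + 1)) atTop (nhds 1) := by
      have : Tendsto (fun n : ℕ => (r + 1) / ((n : ℝ) + 1)) atTop (nhds 0) :=
        Tendsto.div_atTop tendsto_const_nhds
          (tendsto_atTop_add_const_right _ 1 tendsto_natCast_atTop_atTop)
      simpa using (tendsto_const_nhds (x := (1:ℝ))).sub this
    refine key.congr' ?_
    filter_upwards [eventually_ge_atTop (⌈r⌉₊)] with n hn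
    have hrn : r ≤ (n : ℝ) := (Nat.ceil_le.1 le_rfl).trans (Nat.cast_le.2 hn)
    rw [abs_of_nonpos (by linarith)]
    field_simp
    ring
  have h2 : Tendsto (fun n : ℕ => (((n : ℝ) + 2) / ((n : ℝ) + 1)) ^ p) atTop (nhds 1) := by
    have key : Tendsto (fun n : ℕ => 1 + 1 / ((n : ℝ) + 1)) atTop (nhds 1) := by
      have : Tendsto (fun n : ℕ => (1:ℝ) / ((n : ℝ) + 1)) atTop (nhds 0) :=
        Tendsto.div_atTop tendsto_const_nhds
          (tendsto_atTop_add_const_right _ 1 tendsto_natCast_atTop_atTop)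
      simpa using (tendsto_const_nhds (x := (1:ℝ))).add this
    have : Tendsto (fun n : ℕ => ((n : ℝ) + 2) / ((n : ℝ) + 1)) atTop (nhds 1) := by
      refine key.congr fun n => ?_
      have : ((n : ℝ) + 1) ≠ 0 := by positivity
      field_simp
      ring
    simpa using this.pow p
  have h3 : Tendsto
      (fun n : ℕ => |r - n| / ((n : ℝ) + 1) * (((n : ℝ) + 2) / ((n : ℝ) + 1)) ^ p * c)
      atTop (nhds c) := by
    have := (h1.mul h2).mul_const c
    simpa using this
  have hev : ∀ᶠ n : ℕ in atTop,
      |r - (n : ℝ)| / ((n : ℝ) + 1) * (((n : ℝ) + 2) / ((n : ℝ) + 1)) ^ p * c < (1 + c) / 2 :=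
    Filter.Tendsto.eventually_lt_const (by linarith) h3
  apply summable_of_ratio_norm_eventually_le (r := (1 + c) / 2) (by linarith)
  filter_upwards [hev] with n hn
  rw [Real.norm_eq_abs, Real.norm_eq_abs, abs_of_nonneg (htpos _), abs_of_nonneg (htpos _),
    hratio]
  exact mul_le_mul_of_nonneg_left hn.le (htpos n) |>.trans_eq (mul_comm _ _)

lemma summable_ffac_pow (r : ℝ) {c : ℝ} (hc0 : 0 < c) (hc1 : c < 1)
    (f : ℕ → ℝ) (p : ℕ) (hf : ∀ n, |f n| ≤ |ffac r n| * ((n : ℝ) + 1) ^ p * c ^ n / n.factorial) :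
    Summable f :=
  (summable_master r p hc0 hc1).of_norm_bounded (by simpa using hf)

lemma binom_series (r : ℝ) {x : ℝ} (hx0 : 0 ≤ x) (hx1 : x < 1) :
    ∑' n : ℕ, ffac r n * x ^ n / n.factorial = (1 + x) ^ r := by
  set c : ℝ := (1 + x) / 2 with hc
  have hc0 : 0 < c := by positivity
  have hc1 : c < 1 := by simp only [hc]; linarith
  have hxc : x < c := by simp only [hc]; linarith
  set f : ℝ → ℝ := fun y => ∑' n : ℕ, ffac r n * y ^ n / n.factorial with hf
  have habs : ∀ y : ℝ, |y| < c → ∀ n : ℕ,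
      |ffac r n * y ^ n / n.factorial| ≤ |ffac r n| * ((n:ℝ)+1) ^ 0 * c ^ n / n.factorial := by
    intro y hy n
    rw [abs_div, abs_mul, Nat.abs_cast, pow_zero, mul_one, abs_pow]
    gcongr
  have hsum : ∀ y : ℝ, |y| < c → Summable fun n : ℕ => ffac r n * y ^ n / n.factorial :=
    fun y hy => summable_ffac_pow r hc0 hc1 _ 0 (habs y hy)
  set g' : ℕ → ℝ → ℝ := fun n y => ffac r n * ((n : ℝ) * y ^ (n - 1)) / n.factorial with hg'
  have hderiv : ∀ (n : ℕ) (y : ℝ), HasDerivAt (fun z => ffac r n * z ^ n / n.factorial)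
      (g' n y) y := by
    intro n y
    simpa [hg', mul_div_assoc] using ((hasDerivAt_pow n y).const_mul (ffac r n)).div_const
      (n.factorial : ℝ)
  set u : ℕ → ℝ := fun n => |ffac r n| * ((n : ℝ) + 1) * c ^ n / (c * n.factorial) with hu
  have husum : Summable u := by
    have := (summable_master r 1 hc0 hc1).mul_left (1 / c)
    refine this.congr fun n => ?_
    simp only [hu, pow_one]
    field_simp
  have hubound : ∀ (n : ℕ) (y : ℝ), y ∈ Set.Ioo (-c) c → ‖g' n y‖ ≤ u n := by
    intro n y hy
    have hyc : |y| < c := abs_lt.2 ⟨hy.1, hy.2⟩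
    simp only [hg', hu, Real.norm_eq_abs]
    rcases Nat.eq_zero_or_pos n with hn | hn
    · subst hn; simp; positivity
    · have h1 : |ffac r n * ((n : ℝ) * y ^ (n - 1)) / n.factorial|
          = |ffac r n| * ((n : ℝ) * |y| ^ (n - 1)) / n.factorial := by
        rw [abs_div, abs_mul, abs_mul, Nat.abs_cast, Nat.abs_cast, abs_pow]
      rw [h1, div_le_div_iff₀ (by positivity) (by positivity)]
      have h2 : |y| ^ (n - 1) ≤ c ^ (n - 1) := by
        gcongr
      have h3 : c ^ (n-1) * c = c ^ n := by
        rw [← pow_succ]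
        congr 1
        omega
      calc |ffac r n| * ((n:ℝ) * |y| ^ (n-1)) * (c * n.factorial)
          ≤ |ffac r n| * (((n:ℝ)+1) * c ^ (n-1)) * (c * n.factorial) := by
            have hn1 : (n:ℝ) ≤ (n:ℝ) + 1 := by linarith
            gcongr
        _ = |ffac r n| * ((n:ℝ)+1) * c ^ n * n.factorial := by
            rw [← h3]; ring
  have hmem : ∀ y : ℝ, |y| < c → y ∈ Set.Ioo (-c) c := fun y hy => Set.mem_Ioo.2 (abs_lt.1 hy)
  have hder : ∀ y ∈ Set.Ioo (-c) c, HasDerivAt f (∑' n, g' n y) y := by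
    intro y hy
    exact hasDerivAt_tsum_of_isPreconnected husum isOpen_Ioo
      (convex_Ioo _ _).isPreconnected (fun n z _ => hderiv n z) hubound
      (Set.mem_Ioo.2 ⟨by linarith, hc0⟩) (hsum 0 (by simpa using hc0)) hy
  -- summability of g'
  have hsumg' : ∀ y : ℝ, |y| < c → Summable fun n => g' n y := fun y hy =>
    husum.of_norm_bounded (fun n => hubound n y (hmem y hy))
  -- the shifted derivative series
  have hshift : ∀ y : ℝ, |y| < c →
      ∑' n, g' n y = ∑' n : ℕ, ffac r (n+1) * y ^ n / n.factorial := by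
    intro y hy
    rw [Summable.tsum_eq_zero_add (hsumg' y hy)]
    have h0 : g' 0 y = 0 := by simp [hg']
    rw [h0, zero_add]
    refine tsum_congr fun n => ?_
    simp only [hg', Nat.add_sub_cancel]
    have hn1 : ((n:ℝ)+1) ≠ 0 := by positivity
    push_cast [Nat.factorial_succ]
    field_simp
  have hsumS1 : ∀ y : ℝ, |y| < c →
      Summable fun n : ℕ => ffac r (n+1) * y ^ n / n.factorial := by
    intro y hy
    have := (summable_nat_add_iff 1).2 (hsumg' y hy)
    refine this.congr fun n => ?_
    simp only [hg', Nat.add_sub_cancel]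
    have hn1 : ((n:ℝ)+1) ≠ 0 := by positivity
    push_cast [Nat.factorial_succ]
    field_simp
  -- functional equation (1+y) * S1 = r * f y
  have hfe : ∀ y : ℝ, |y| < c →
      (1 + y) * (∑' n : ℕ, ffac r (n+1) * y ^ n / n.factorial) = r * f y := by
    intro y hy
    set S1 : ℝ := ∑' n : ℕ, ffac r (n+1) * y ^ n / n.factorial with hS1
    have hsum2 : Summable fun n : ℕ => (n : ℝ) * (ffac r n * y ^ n / n.factorial) := by
      refine summable_ffac_pow r hc0 hc1 _ 1 fun n => ?_
      rw [abs_mul, abs_div, abs_mul, Nat.abs_cast, Nat.abs_cast, abs_pow, pow_one, ← mul_div_assoc]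
      have h1 : (n:ℝ) * (|ffac r n| * |y| ^ n) ≤ |ffac r n| * ((n:ℝ) + 1) * c ^ n := by
        rw [show (n:ℝ) * (|ffac r n| * |y| ^ n) = |ffac r n| * (n:ℝ) * |y| ^ n from by ring]
        gcongr <;> first | exact abs_nonneg _ | linarith | exact hy.le
      gcongr
    -- S2 = y * S1
    have hS2 : ∑' n : ℕ, (n : ℝ) * (ffac r n * y ^ n / n.factorial) = y * S1 := by
      rw [Summable.tsum_eq_zero_add hsum2]
      simp only [Nat.cast_zero, zero_mul, zero_add]
      rw [hS1, ← tsum_mul_left]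
      refine tsum_congr fun n => ?_
      have hn1 : ((n:ℝ)+1) ≠ 0 := by positivity
      push_cast [Nat.factorial_succ]
      field_simp
      ring
    -- S1 = r * f y - S2
    have hS1eq : S1 = r * f y - y * S1 := by
      rw [← hS2, hS1, hf]
      rw [← tsum_mul_left, ← Summable.tsum_sub ((hsum y hy).mul_left r) hsum2]
      refine tsum_congr fun n => ?_
      rw [ffac_succ]
      have hfn : (n.factorial : ℝ) ≠ 0 := Nat.cast_ne_zero.2 n.factorial_ne_zero
      field_simp
    linarith [hS1eq]
  -- h y = f y * (1+y)^(-r) has derivative 0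
  set h : ℝ → ℝ := fun y => f y * (1 + y) ^ (-r) with hh
  have hder0 : ∀ y ∈ Set.Ioo (-c) c, HasDerivAt h 0 y := by
    intro y hy
    have hyc : |y| < c := abs_lt.2 ⟨hy.1, hy.2⟩
    have h1y : (0:ℝ) < 1 + y := by
      have := hy.1
      have : -1 < y := by linarith
      linarith
    have hd1 : HasDerivAt f (∑' n : ℕ, ffac r (n+1) * y ^ n / n.factorial) y := by
      rw [← hshift y hyc]; exact hder y hy
    have hbase : HasDerivAt (fun z : ℝ => 1 + z) 1 y := (hasDerivAt_id y).const_add 1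
    have hd2 : HasDerivAt (fun z : ℝ => (1 + z) ^ (-r)) (1 * (-r) * (1 + y) ^ (-r - 1)) y :=
      hbase.rpow_const (Or.inl (ne_of_gt h1y))
    have hd3 : HasDerivAt (fun z => f z * (1 + z) ^ (-r)) _ y := hd1.mul hd2
    convert hd3 using 1
    set S1 : ℝ := ∑' n : ℕ, ffac r (n+1) * y ^ n / n.factorial
    have hfe' := hfe y hyc
    have hrw : (1 + y) ^ (-r) = (1 + y) ^ (-r - 1) * (1 + y) := by
      rw [← Real.rpow_add_one (ne_of_gt h1y) (-r-1)]
      ring_nf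
    rw [hrw]
    have : S1 * ((1 + y) ^ (-r - 1) * (1 + y)) + f y * (1 * (-r) * (1 + y) ^ (-r - 1))
        = (1 + y) ^ (-r - 1) * ((1 + y) * S1 - r * f y) := by ring
    rw [this, hfe']
    ring
  -- h is constant on [0, x], h 0 = 1
  have hx_mem : ∀ y ∈ Set.Icc (0:ℝ) x, y ∈ Set.Ioo (-c) c := by
    intro y hy
    exact Set.mem_Ioo.2 ⟨by linarith [hy.1], by linarith [hy.2]⟩
  have hconst : h x = h 0 := by
    refine constant_of_has_deriv_right_zero
      (fun y hy => (hder0 y (hx_mem y hy)).continuousAt.continuousWithinAt)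
      (fun y hy => (hder0 y (hx_mem y (Set.Ico_subset_Icc_self hy))).hasDerivWithinAt)
      x (Set.right_mem_Icc.2 hx0)
  have hf0 : f 0 = 1 := by
    show (∑' n : ℕ, ffac r n * (0:ℝ) ^ n / n.factorial) = 1
    rw [tsum_eq_single 0 (fun n hn => by simp [zero_pow hn])]
    simp [ffac]
  have hh0 : h 0 = 1 := by
    show f 0 * ((1:ℝ) + 0) ^ (-r) = 1
    rw [hf0, one_mul]
    norm_num
  have hfx : f x * (1 + x) ^ (-r) = 1 := hconst.trans hh0
  have hpos : (0:ℝ) < 1 + x := by linarith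
  have hne : (1 + x) ^ r ≠ 0 := ne_of_gt (Real.rpow_pos_of_pos hpos r)
  rw [Real.rpow_neg hpos.le] at hfx
  calc f x = f x * ((1 + x) ^ r)⁻¹ * (1 + x) ^ r := by
        rw [mul_assoc, inv_mul_cancel₀ hne, mul_one]
    _ = (1 + x) ^ r := by rw [hfx, one_mul]

theorem stmt_6 (lam a : ℝ) (hlam : 0 < lam) (ha : 0 < a) (hla : lam * a < 1)
    (S1 : ℕ → ℕ → ℝ)
    (hS1 : ∀ (n : ℕ) (x : ℝ),
      ffac x n = ∑ l ∈ Finset.range (n + 1), S1 n l * dffac lam x l)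
    (m : ℕ) :
    (1 + lam * a) ^ m * ∑ k ∈ Finset.range (m + 1), degBellP lam a k * S1 m k =
      a ^ m * dffac lam 1 m := by
  have hlam' : lam ≠ 0 := ne_of_gt hlam
  set q : ℝ := lam * a with hqdef
  have hq0 : 0 < q := mul_pos hlam ha
  have hq1 : q < 1 := hla
  have h1q : (0:ℝ) < 1 + q := by linarith
  set r : ℝ := 1 / lam with hrdef
  -- dffac lam 1 j = lam ^ j * ffac r j
  have hd1 : ∀ j : ℕ, dffac lam 1 j = lam ^ j * ffac r j := by
    intro j
    rw [dffac, ffac,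
      show lam ^ j = ∏ _i ∈ Finset.range j, lam from by simp [Finset.prod_const],
      ← Finset.prod_mul_distrib]
    refine Finset.prod_congr rfl fun i _ => ?_
    have hlr : lam * r = 1 := by rw [hrdef, mul_one_div, div_self hlam']
    linear_combination -hlr
  -- bound on dffac lam j k
  have hdb : ∀ (k j : ℕ), |dffac lam (j:ℝ) k|
      ≤ ((j:ℝ)+1)^k * ∏ i ∈ Finset.range k, (1 + (i:ℝ) * lam) := by
    intro k j
    rw [dffac, Finset.abs_prod,
      show ((j:ℝ)+1)^k * ∏ i ∈ Finset.range k, (1+(i:ℝ)*lam)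
        = ∏ i ∈ Finset.range k, (((j:ℝ)+1) * (1+(i:ℝ)*lam)) from by
          rw [Finset.prod_mul_distrib, Finset.prod_const, Finset.card_range]]
    refine Finset.prod_le_prod (fun i _ => abs_nonneg _) fun i _ => ?_
    have hj : (0:ℝ) ≤ (j:ℝ) := Nat.cast_nonneg j
    have hil : (0:ℝ) ≤ (i:ℝ) * lam := mul_nonneg (Nat.cast_nonneg i) hlam.le
    rw [abs_le]
    constructor <;> nlinarith
  -- summability of the Bell series for each k
  have hsummand : ∀ k : ℕ,
      Summable (fun j : ℕ => ffac r j * dffac lam (j:ℝ) k * q ^ j / j.factorial) := by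
    intro k
    set C : ℝ := ∏ i ∈ Finset.range k, (1 + (i:ℝ) * lam) with hC
    have hC0 : 0 ≤ C := Finset.prod_nonneg fun i _ => by
      have : (0:ℝ) ≤ (i:ℝ) * lam := mul_nonneg (Nat.cast_nonneg i) hlam.le
      linarith
    refine Summable.of_norm_bounded
      (g := fun j => C * (|ffac r j| * ((j:ℝ)+1)^k * q ^ j / j.factorial))
      ((summable_master r k hq0 hq1).mul_left C) fun j => ?_
    rw [Real.norm_eq_abs, abs_div, abs_mul, abs_mul, abs_pow, abs_of_pos hq0,
      Nat.abs_cast]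
    rw [div_le_iff₀ (by positivity)]
    have h1 : |ffac r j| * |dffac lam (j:ℝ) k| * q ^ j
        ≤ |ffac r j| * (((j:ℝ)+1)^k * C) * q ^ j :=
      mul_le_mul_of_nonneg_right
        (mul_le_mul_of_nonneg_left (hdb k j) (abs_nonneg _)) (by positivity)
    calc |ffac r j| * |dffac lam (j:ℝ) k| * q ^ j
        ≤ |ffac r j| * (((j:ℝ)+1)^k * C) * q ^ j := h1
      _ = C * (|ffac r j| * ((j:ℝ)+1)^k * q ^ j / j.factorial) * j.factorial := by
          have : (j.factorial:ℝ) ≠ 0 := Nat.cast_ne_zero.2 j.factorial_ne_zero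
          field_simp
  -- rewrite degBellP
  have hBell : ∀ k : ℕ, degBellP lam a k
      = (1+q) ^ (-r) * ∑' j : ℕ, ffac r j * dffac lam (j:ℝ) k * q ^ j / j.factorial := by
    intro k
    rw [degBellP]
    congr 1
    refine tsum_congr fun j => ?_
    rw [hd1 j, hqdef, mul_pow]
    ring
  -- step 1: swap sums
  have step1 : ∑ k ∈ Finset.range (m + 1), degBellP lam a k * S1 m k
      = (1+q) ^ (-r) * ∑' j : ℕ, ffac r j * q ^ j / j.factorial * ffac (j:ℝ) m := by
    have h1 : ∀ k ∈ Finset.range (m+1), degBellP lam a k * S1 m k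
        = (1+q) ^ (-r) *
          ∑' j : ℕ, ffac r j * dffac lam (j:ℝ) k * q ^ j / j.factorial * S1 m k := by
      intro k _
      rw [hBell k, mul_assoc, tsum_mul_right]
    rw [Finset.sum_congr rfl h1, ← Finset.mul_sum]
    congr 1
    rw [← Summable.tsum_finsetSum (fun k _ => (hsummand k).mul_right (S1 m k))]
    refine tsum_congr fun j => ?_
    rw [hS1 m (j:ℝ), Finset.mul_sum]
    exact Finset.sum_congr rfl fun k _ => by ring
  -- step 2: reindex and apply binomial series
  have step2 : ∑' j : ℕ, ffac r j * q ^ j / j.factorial * ffac (j:ℝ) m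
      = ffac r m * q ^ m * (1+q) ^ (r - (m:ℝ)) := by
    have hinj : Function.Injective (fun i : ℕ => m + i) := add_right_injective m
    have hsupp : Function.support (fun j : ℕ => ffac r j * q ^ j / j.factorial * ffac (j:ℝ) m)
        ⊆ Set.range (fun i : ℕ => m + i) := by
      intro j hj
      rcases lt_or_ge j m with h | h
      · refine absurd ?_ hj
        show ffac r j * q ^ j / (j.factorial:ℝ) * ffac (j:ℝ) m = 0
        rw [ffac_nat_eq_zero h, mul_zero]
      · exact ⟨j - m, show m + (j - m) = j by omega⟩
    rw [← hinj.tsum_eq hsupp]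
    have hterm : ∀ i : ℕ, ffac r (m + i) * q ^ (m + i) / ((m + i).factorial : ℝ)
          * ffac ((m + i : ℕ):ℝ) m
        = (ffac r m * q ^ m) * (ffac (r - (m:ℝ)) i * q ^ i / i.factorial) := by
      intro i
      have hmi : m + i = i + m := Nat.add_comm m i
      have hfact := ffac_nat_factorial i m
      rw [hmi] at *
      have hne1 : ((i + m).factorial : ℝ) ≠ 0 := Nat.cast_ne_zero.2 (i+m).factorial_ne_zero
      have hne2 : (i.factorial : ℝ) ≠ 0 := Nat.cast_ne_zero.2 i.factorial_ne_zero
      have key : ffac ((i + m : ℕ):ℝ) m / ((i + m).factorial : ℝ) = 1 / (i.factorial : ℝ) := by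
        rw [div_eq_div_iff hne1 hne2, one_mul, hfact]
      have hsplit : ffac r (i + m) = ffac r m * ffac (r - (m:ℝ)) i := by
        rw [Nat.add_comm i m, ffac_add]
      rw [hsplit, pow_add]
      rw [div_mul_eq_mul_div, mul_comm (ffac r m * ffac (r - (m:ℝ)) i * (q ^ i * q ^ m)) _,
        ← mul_div_assoc, mul_comm _ (ffac r m * ffac (r - (m:ℝ)) i * (q ^ i * q ^ m)),
        mul_div_assoc, key]
      field_simp
    calc ∑' i : ℕ, ffac r (m + i) * q ^ (m + i) / ((m + i).factorial : ℝ)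
            * ffac ((m + i : ℕ):ℝ) m
        = ∑' i : ℕ, (ffac r m * q ^ m) * (ffac (r - (m:ℝ)) i * q ^ i / i.factorial) :=
          tsum_congr hterm
      _ = (ffac r m * q ^ m) * ∑' i : ℕ, ffac (r - (m:ℝ)) i * q ^ i / i.factorial :=
          tsum_mul_left
      _ = ffac r m * q ^ m * (1+q) ^ (r - (m:ℝ)) := by
          rw [binom_series (r - (m:ℝ)) hq0.le hq1]
  -- finish
  rw [step1, step2, hd1 m]
  have hpow : (1+q) ^ (-r) * (ffac r m * q ^ m * (1+q) ^ (r - (m:ℝ)))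
      = ffac r m * q ^ m * (1+q) ^ (-(m:ℝ)) := by
    rw [show (-(m:ℝ)) = -r + (r - (m:ℝ)) from by ring, Real.rpow_add h1q]
    ring
  rw [hpow]
  have hmq : ((1+q):ℝ) ^ (m:ℕ) * (1+q) ^ (-(m:ℝ)) = 1 := by
    rw [← Real.rpow_natCast (1+q) m, ← Real.rpow_add h1q]
    simp
  calc (1+q)^m * (ffac r m * q ^ m * (1+q) ^ (-(m:ℝ)))
      = ((1+q)^m * (1+q) ^ (-(m:ℝ))) * (ffac r m * q ^ m) := by ring
    _ = ffac r m * q ^ m := by rw [hmq, one_mul]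
    _ = a ^ m * (lam ^ m * ffac r m) := by rw [hqdef, mul_pow]; ring
end

section
/- Let λ > 0, α > 0 with λα < 1, and let X ∼ Poi_λ(α) be the degenerate Poisson random variable with parameter α. Then for every integer n ≥ 0, the rising factorial moment satisfies E[⟨X⟩_n] = Σ_{k=0}^n B_{k,λ}(α) |S_1(n,k)|, where B_{k,λ} is the dimorphic degenerate Bell polynomial and |S_1(n,k)| are the unsigned Stirling numbers of the first kind. -/
/-- The dimorphic degenerate Bell polynomial `B_{n,lam}(x)`. -/
noncomputable def dimBellP (lam x : ℝ) (n : ℕ) : ℝ :=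
  (1 + lam * x) ^ (-(1 / lam)) *
    ∑' k : ℕ, dffac lam 1 k * (k : ℝ) ^ n * x ^ k / (k.factorial : ℝ)

private lemma dffac_succ (lam x : ℝ) (i : ℕ) : dffac lam x (i+1) = dffac lam x i * (x - i * lam) :=
  Finset.prod_range_succ _ _

private lemma summable_aux (lam a : ℝ) (hlam : 0 < lam) (ha : 0 < a) (hla : lam * a < 1) (k : ℕ) :
    Summable (fun i : ℕ => dffac lam 1 i * (i : ℝ) ^ k * a ^ i / (i.factorial : ℝ)) := by
  set r : ℝ := (lam * a + 1) / 2 with hr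
  have hr1 : r < 1 := by rw [hr]; linarith
  have hlar : lam * a < r := by rw [hr]; linarith
  apply summable_of_ratio_norm_eventually_le hr1
  -- tendsto of the comparison ratio
  have h1 : Filter.Tendsto (fun i : ℕ => (1 : ℝ) + 1 / i) Filter.atTop (nhds 1) := by
    have := tendsto_one_div_atTop_nhds_zero_nat (𝕜 := ℝ)
    simpa using tendsto_const_nhds.add this
  have h1k : Filter.Tendsto (fun i : ℕ => ((1 : ℝ) + 1 / i) ^ k) Filter.atTop (nhds 1) := by
    simpa using h1.pow k
  have h2 : Filter.Tendsto (fun i : ℕ => a / ((i : ℝ) + 1)) Filter.atTop (nhds 0) := by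
    apply Filter.Tendsto.div_atTop (tendsto_const_nhds)
    exact Filter.tendsto_atTop_add_const_right _ 1 tendsto_natCast_atTop_atTop
  have h3 : Filter.Tendsto (fun i : ℕ => (i : ℝ) / ((i : ℝ) + 1)) Filter.atTop (nhds 1) :=
    tendsto_natCast_div_add_atTop (1 : ℝ)
  have hu : Filter.Tendsto
      (fun i : ℕ => ((1 : ℝ) + 1 / i) ^ k * (a / ((i : ℝ) + 1) + lam * a * ((i : ℝ) / ((i : ℝ) + 1))))
      Filter.atTop (nhds (lam * a)) := by
    have := h1k.mul (h2.add ((tendsto_const_nhds (x := lam * a)).mul h3))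
    simpa using this
  have hev : ∀ᶠ i : ℕ in Filter.atTop,
      ((1 : ℝ) + 1 / i) ^ k * (a / ((i : ℝ) + 1) + lam * a * ((i : ℝ) / ((i : ℝ) + 1))) < r :=
    hu.eventually_lt_const hlar
  filter_upwards [hev, Filter.eventually_ge_atTop 1] with i hi hi1
  have hi0 : (0 : ℝ) < (i : ℝ) := by exact_mod_cast hi1
  have hik : (0 : ℝ) < (i : ℝ) ^ k := pow_pos hi0 k
  have hfac : ((i.factorial : ℝ)) ≠ 0 := by exact_mod_cast i.factorial_ne_zero
  have hip : (0 : ℝ) < (i : ℝ) + 1 := by positivity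
  -- rewrite x (i+1) = x i * ratio
  have hx : dffac lam 1 (i+1) * ((i+1 : ℕ) : ℝ) ^ k * a ^ (i+1) / (((i+1).factorial : ℝ))
      = (dffac lam 1 i * (i : ℝ) ^ k * a ^ i / (i.factorial : ℝ)) *
        ((((i : ℝ) + 1) ^ k / (i : ℝ) ^ k) * (1 - (i : ℝ) * lam) * a / ((i : ℝ) + 1)) := by
    rw [dffac_succ, Nat.factorial_succ]
    push_cast
    field_simp
    ring
  rw [hx, norm_mul, mul_comm r]
  apply mul_le_mul_of_nonneg_left _ (norm_nonneg _)
  -- bound the ratio norm by r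
  have hratio : ‖(((i : ℝ) + 1) ^ k / (i : ℝ) ^ k) * (1 - (i : ℝ) * lam) * a / ((i : ℝ) + 1)‖
      ≤ (((i : ℝ) + 1) ^ k / (i : ℝ) ^ k) * (1 + (i : ℝ) * lam) * a / ((i : ℝ) + 1) := by
    rw [Real.norm_eq_abs, abs_div, abs_mul, abs_mul]
    rw [abs_of_pos (div_pos (pow_pos hip k) hik), abs_of_pos ha, abs_of_pos hip]
    have : |1 - (i : ℝ) * lam| ≤ 1 + (i : ℝ) * lam := by
      rw [abs_sub_comm]
      refine (abs_sub _ _).trans ?_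
      rw [abs_of_nonneg (by positivity), abs_one]
      linarith
    gcongr
  refine hratio.trans ?_
  -- show the upper bound equals the tendsto expression
  have heq : (((i : ℝ) + 1) ^ k / (i : ℝ) ^ k) * (1 + (i : ℝ) * lam) * a / ((i : ℝ) + 1)
      = ((1 : ℝ) + 1 / i) ^ k * (a / ((i : ℝ) + 1) + lam * a * ((i : ℝ) / ((i : ℝ) + 1))) := by
    have hi0' : (i : ℝ) ≠ 0 := hi0.ne'
    rw [one_add_div hi0', div_pow]
    field_simp
  rw [heq]
  exact hi.le

theorem stmt_8 (lam a : ℝ) (hlam : 0 < lam) (ha : 0 < a) (hla : lam * a < 1)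
    (c : ℕ → ℕ → ℝ)
    (hc : ∀ (n : ℕ) (x : ℝ),
      rfac x n = ∑ k ∈ Finset.range (n + 1), c n k * x ^ k)
    (n : ℕ) :
    degPoiE lam a (fun i => rfac (i : ℝ) n) =
      ∑ k ∈ Finset.range (n + 1), dimBellP lam a k * c n k := by
  unfold degPoiE dimBellP
  have hterm : ∀ i : ℕ, rfac (i : ℝ) n * dffac lam 1 i * a ^ i / (i.factorial : ℝ)
      = ∑ k ∈ Finset.range (n + 1),
          c n k * (dffac lam 1 i * (i : ℝ) ^ k * a ^ i / (i.factorial : ℝ)) := by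
    intro i
    rw [hc n (i : ℝ), Finset.sum_mul, Finset.sum_mul, Finset.sum_div]
    refine Finset.sum_congr rfl fun k _ => ?_
    ring
  have hsum : ∀ k ∈ Finset.range (n + 1),
      Summable (fun i : ℕ => c n k * (dffac lam 1 i * (i : ℝ) ^ k * a ^ i / (i.factorial : ℝ))) :=
    fun k _ => (summable_aux lam a hlam ha hla k).mul_left _
  calc (1 + lam * a) ^ (-(1 / lam)) *
        ∑' i : ℕ, rfac (i : ℝ) n * dffac lam 1 i * a ^ i / (i.factorial : ℝ)
      = (1 + lam * a) ^ (-(1 / lam)) *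
        ∑' i : ℕ, ∑ k ∈ Finset.range (n + 1),
          c n k * (dffac lam 1 i * (i : ℝ) ^ k * a ^ i / (i.factorial : ℝ)) := by
        rw [tsum_congr hterm]
    _ = (1 + lam * a) ^ (-(1 / lam)) *
        ∑ k ∈ Finset.range (n + 1), c n k *
          ∑' i : ℕ, dffac lam 1 i * (i : ℝ) ^ k * a ^ i / (i.factorial : ℝ) := by
        rw [Summable.tsum_finsetSum hsum]
        congr 1
        exact Finset.sum_congr rfl fun k _ => tsum_mul_left
    _ = ∑ k ∈ Finset.range (n + 1),
        ((1 + lam * a) ^ (-(1 / lam)) *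
          ∑' i : ℕ, dffac lam 1 i * (i : ℝ) ^ k * a ^ i / (i.factorial : ℝ)) * c n k := by
        rw [Finset.mul_sum]
        exact Finset.sum_congr rfl fun k _ => by ring
end

section
/- For every λ > 0, x > 0 with λx < 1, the zero-truncated degenerate Lah-Bell polynomials satisfy B^{(L,0)}_{0,λ}(x) = 1 and, for every integer n ≥ 1, B^{(L,0)}_{n,λ}(x) = B^L_{n,λ}(x) / (1 − (1+λx)^{−1/λ}), where B^L_{n,λ} is the degenerate Lah-Bell polynomial. -/
/-- The degenerate Lah-Bell polynomial: n! times the n-th Taylor coefficient at t = 0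
of the function t => (1+lam*x)^(-1/lam) * (1 + lam*x/(1-t))^(1/lam). -/
noncomputable def lahBell (lam x : ℝ) (n : ℕ) : ℝ :=
  iteratedDeriv n
    (fun t : ℝ => (1 + lam * x) ^ (-(1 / lam)) * (1 + lam * x / (1 - t)) ^ (1 / lam)) 0

/-- The zero-truncated degenerate Lah-Bell polynomial: n! times the n-th Taylor
coefficient at t = 0 of t => ((1 + lam*x/(1-t))^(1/lam) - 1)/((1+lam*x)^(1/lam) - 1). -/
noncomputable def ztLahBell (lam x : ℝ) (n : ℕ) : ℝ :=
  iteratedDeriv n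
    (fun t : ℝ => ((1 + lam * x / (1 - t)) ^ (1 / lam) - 1) / ((1 + lam * x) ^ (1 / lam) - 1)) 0

lemma iteratedDeriv_cmul (a : ℝ) (g : ℝ → ℝ) :
    ∀ n : ℕ, iteratedDeriv n (fun t => a * g t) = fun t => a * iteratedDeriv n g t := by
  intro n
  induction n with
  | zero => simp [iteratedDeriv_zero]
  | succ m ih =>
    rw [iteratedDeriv_succ, ih, iteratedDeriv_succ]
    funext t
    exact deriv_const_mul_field a

lemma iteratedDeriv_cmul_sub (a b : ℝ) (g : ℝ → ℝ) (n : ℕ) (hn : 1 ≤ n) (t : ℝ) :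
    iteratedDeriv n (fun t => a * g t - b) t = a * iteratedDeriv n g t := by
  obtain ⟨m, rfl⟩ := Nat.exists_eq_add_of_le hn
  rw [add_comm, iteratedDeriv_succ']
  have h1 : deriv (fun t => a * g t - b) = fun t => a * deriv g t := by
    funext s
    rw [deriv_sub_const]
    exact deriv_const_mul_field a
  rw [h1, iteratedDeriv_cmul]
  simp only [← iteratedDeriv_succ']

theorem stmt_10 (lam x : ℝ) (hlam : 0 < lam) (hx : 0 < x) (hlx : lam * x < 1) :
    ztLahBell lam x 0 = 1 ∧
      ∀ n : ℕ, 1 ≤ n →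
        ztLahBell lam x n = lahBell lam x n / (1 - (1 + lam * x) ^ (-(1 / lam))) := by
  set c : ℝ := (1 + lam * x) ^ (1 / lam) with hc
  have hbase : (1 : ℝ) < 1 + lam * x := by nlinarith
  have hc1 : 1 < c := by
    rw [hc]
    exact Real.one_lt_rpow_iff_of_pos (by linarith) |>.mpr (Or.inl ⟨hbase, by positivity⟩)
  have hcne : c - 1 ≠ 0 := by linarith
  have hcpos : 0 < c := by linarith
  have hinv : (1 + lam * x) ^ (-(1 / lam)) = c⁻¹ := by
    rw [hc, Real.rpow_neg (by linarith)]
  set g : ℝ → ℝ := fun t => (1 + lam * x / (1 - t)) ^ (1 / lam) with hg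
  have hzt : (fun t : ℝ => ((1 + lam * x / (1 - t)) ^ (1 / lam) - 1) /
      ((1 + lam * x) ^ (1 / lam) - 1)) = fun t => (c - 1)⁻¹ * g t - (c - 1)⁻¹ := by
    funext t
    rw [hg, ← hc]
    field_simp
  constructor
  · rw [ztLahBell, iteratedDeriv_zero]
    have : (1 : ℝ) - 0 = 1 := by norm_num
    simp only [this, div_one, ← hc]
    field_simp
  · intro n hn
    rw [ztLahBell, hzt, iteratedDeriv_cmul_sub _ _ _ n hn]
    rw [lahBell, hinv]
    have : (fun t : ℝ => c⁻¹ * (1 + lam * x / (1 - t)) ^ (1 / lam)) =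
        fun t => c⁻¹ * g t := rfl
    rw [this, iteratedDeriv_cmul]
    have h1c : 1 - c⁻¹ = (c - 1) / c := by field_simp
    rw [h1c]
    field_simp
end
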